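/- Let π > 0 and define j : [0, ∞) → ℝ by j(x) = x √(4x + π² x⁴) − π x³. Then j is strictly increasing on [0, ∞), j(0) = 0, j(x) → 2/π as x → ∞, and consequently 0 ≤ j(x) < 2/π for every x ≥ 0. -/

import Mathlib

noncomputable section

/-- The function `j(x) = x√(4x + π²x⁴) − πx³`. -/
def jfun (π x : ℝ) : ℝ := x * Real.sqrt (4 * x + π ^ 2 * x ^ 4) - π * x ^ 3

/-!
Rationalising, `j(x) = x³(√(4/x³ + π²) − π) = 4 / (π + √(4/x³ + π²))` for `x > 0`.
The square root decreases from `+∞` to `|π|` as `x` runs through `(0, ∞)`, so `j` increases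
from `0`, and for `π > 0` it tends to `4 / (2π) = 2/π` while staying below it.
-/

open Filter Set Topology

lemma jfun_zero (π : ℝ) : jfun π 0 = 0 := by
  simp [jfun]

lemma abs_lt_sqrt_four_div_pow_three_add_sq (π : ℝ) {x : ℝ} (hx : 0 < x) :
    |π| < √(4 / x ^ 3 + π ^ 2) := by
  rw [Real.lt_sqrt (abs_nonneg π), sq_abs]
  have : 0 < 4 / x ^ 3 := by positivity
  linarith

lemma add_sqrt_four_div_pow_three_add_sq_pos (π : ℝ) {x : ℝ} (hx : 0 < x) :
    0 < π + √(4 / x ^ 3 + π ^ 2) := by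
  linarith [abs_lt_sqrt_four_div_pow_three_add_sq π hx, neg_abs_le π]

lemma jfun_eq_four_div (π : ℝ) {x : ℝ} (hx : 0 < x) :
    jfun π x = 4 / (π + √(4 / x ^ 3 + π ^ 2)) := by
  set s := √(4 / x ^ 3 + π ^ 2)
  have hs_sq : s ^ 2 = 4 / x ^ 3 + π ^ 2 := Real.sq_sqrt (by positivity)
  have hden : 0 < π + s := add_sqrt_four_div_pow_three_add_sq_pos π hx
  have hroot : √(4 * x + π ^ 2 * x ^ 4) = x ^ 2 * s := by
    rw [← Real.sqrt_sq (by positivity : 0 ≤ x ^ 2), ← Real.sqrt_mul (by positivity)]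
    congr 1
    field_simp
  rw [jfun, hroot, eq_div_iff hden.ne']
  have hx3 : x ^ 3 * (s ^ 2 - π ^ 2) = 4 := by
    rw [hs_sq]
    field_simp
    ring
  linear_combination hx3

lemma jfun_pos (π : ℝ) {x : ℝ} (hx : 0 < x) : 0 < jfun π x := by
  rw [jfun_eq_four_div π hx]
  exact div_pos four_pos (add_sqrt_four_div_pow_three_add_sq_pos π hx)

lemma strictAntiOn_sqrt_four_div_pow_three_add_sq (π : ℝ) :
    StrictAntiOn (fun x : ℝ => √(4 / x ^ 3 + π ^ 2)) (Ioi 0) := by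
  intro x (hx : 0 < x) y (hy : 0 < y) hxy
  have h : 4 / y ^ 3 < 4 / x ^ 3 :=
    div_lt_div_of_pos_left four_pos (pow_pos hx 3) (pow_lt_pow_left₀ hxy hx.le three_ne_zero)
  exact Real.sqrt_lt_sqrt (by positivity) (by linarith)

lemma strictMonoOn_jfun (π : ℝ) : StrictMonoOn (jfun π) (Ici 0) := by
  intro x (hx : 0 ≤ x) y _ hxy
  rcases hx.eq_or_lt with rfl | hx
  · rw [jfun_zero]
    exact jfun_pos π hxy
  have hy : 0 < y := hx.trans hxy
  rw [jfun_eq_four_div π hx, jfun_eq_four_div π hy]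
  have hsqrt : √(4 / y ^ 3 + π ^ 2) < √(4 / x ^ 3 + π ^ 2) :=
    strictAntiOn_sqrt_four_div_pow_three_add_sq π hx hy hxy
  exact div_lt_div_of_pos_left four_pos (add_sqrt_four_div_pow_three_add_sq_pos π hy)
    (add_lt_add_right hsqrt π)

lemma tendsto_jfun_atTop {π : ℝ} (hπ : 0 < π) : Tendsto (jfun π) atTop (𝓝 (2 / π)) := by
  have hinner : Tendsto (fun x : ℝ => 4 / x ^ 3 + π ^ 2) atTop (𝓝 (0 + π ^ 2)) :=
    (tendsto_const_nhds.div_atTop (tendsto_pow_atTop three_ne_zero)).add_const _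
  have hlim : 4 / (π + √(0 + π ^ 2)) = 2 / π := by
    rw [zero_add, Real.sqrt_sq hπ.le]
    field_simp
    norm_num
  rw [← hlim]
  refine Tendsto.congr' ?_ (tendsto_const_nhds.div
    (((Real.continuous_sqrt.tendsto _).comp hinner).const_add π) ?_)
  · filter_upwards [eventually_gt_atTop 0] with x hx
    exact (jfun_eq_four_div π hx).symm
  · rw [zero_add, Real.sqrt_sq hπ.le]
    positivity

lemma jfun_lt_two_div {π : ℝ} (hπ : 0 < π) {x : ℝ} (hx : 0 ≤ x) : jfun π x < 2 / π := by
  rcases hx.eq_or_lt with rfl | hx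
  · rw [jfun_zero]
    positivity
  rw [jfun_eq_four_div π hx, div_lt_div_iff₀ (by positivity) hπ]
  have := abs_lt_sqrt_four_div_pow_three_add_sq π hx
  rw [abs_of_pos hπ] at this
  linarith

/-- For `π > 0`, the function `j` is strictly increasing on `[0,∞)`, `j(0) = 0`,
`j(x) → 2/π` as `x → ∞`, and `0 ≤ j(x) < 2/π` for every `x ≥ 0`. -/
theorem stmt12 (π : ℝ) (hπ : 0 < π) :
    StrictMonoOn (jfun π) (Set.Ici 0) ∧
    jfun π 0 = 0 ∧
    Filter.Tendsto (jfun π) Filter.atTop (nhds (2 / π)) ∧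
    ∀ x : ℝ, 0 ≤ x → 0 ≤ jfun π x ∧ jfun π x < 2 / π := by
  refine ⟨strictMonoOn_jfun π, jfun_zero π, tendsto_jfun_atTop hπ,
    fun x hx => ⟨?_, jfun_lt_two_div hπ hx⟩⟩
  rw [← jfun_zero π]
  exact (strictMonoOn_jfun π).monotoneOn self_mem_Ici hx hx
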